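/- arXiv:1301.5028 — 13 statements merged into one kernel-verified Lean document; each statement's English description precedes it below -/
import Mathlib

section
/- Let a, b, c, d be integers with a squarefree, d ≠ 0, and suppose d divides a + b + c. Set γ = (a + b + c)/d. Then the only nontrivial integer triples (x, y, z) in geometric progression (x = v, y = vu, z = vu² with v ≠ 0) satisfying ax² + by² + cz² = dxyz are (γ, γ, γ) and (−γ, γ, −γ). -/
theorem stmt_3 (a b c d γ : ℤ) (ha : Squarefree a) (hd : d ≠ 0)
    (hγ : d * γ = a + b + c) :
    ∀ u v : ℤ, v ≠ 0 →
      (a * v ^ 2 + b * (v * u) ^ 2 + c * (v * u ^ 2) ^ 2 =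
          d * v * (v * u) * (v * u ^ 2) ↔
        (v, v * u, v * u ^ 2) = (γ, γ, γ) ∨
        (v, v * u, v * u ^ 2) = (-γ, γ, -γ)) := by
  intro u v hv
  constructor
  · intro h
    have hv2 : (v ^ 2 : ℤ) ≠ 0 := pow_ne_zero _ hv
    have key : a + b * u ^ 2 + c * u ^ 4 = d * v * u ^ 3 := by
      have hm : v ^ 2 * (a + b * u ^ 2 + c * u ^ 4) = v ^ 2 * (d * v * u ^ 3) := by
        linear_combination h
      exact mul_left_cancel₀ hv2 hm
    have hu : u * u ∣ a := ⟨d * v * u - b - c * u ^ 2, by linear_combination key⟩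
    rcases Int.isUnit_iff.mp (ha _ hu) with h1 | h1
    · left
      subst h1
      have hdv : d * v = d * γ := by linear_combination -key - hγ
      have hvγ : v = γ := mul_left_cancel₀ hd hdv
      simp [hvγ]
    · right
      subst h1
      have hdv : d * (-v) = d * γ := by linear_combination -key - hγ
      have hvγ : v = -γ := by linarith [mul_left_cancel₀ hd hdv]
      simp [hvγ]
  · rintro (h | h) <;>
      (simp only [Prod.mk.injEq] at h; obtain ⟨h1, h2, h3⟩ := h;
        rw [h3, h2, h1]; linear_combination -γ ^ 2 * hγ)
end

section
/- Let a, b, c, d be integers with a squarefree and d ≠ 0. If d does not divide a + b + c, then there are no integer triples (v, vu, vu²) with v ≠ 0 satisfying a·v² + b(vu)² + c(vu²)² = d·v·(vu)·(vu²). -/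
theorem stmt_4 (a b c d : ℤ) (ha : Squarefree a) (hd : d ≠ 0)
    (hnd : ¬ d ∣ (a + b + c)) :
    ¬ ∃ u v : ℤ, v ≠ 0 ∧
      a * v ^ 2 + b * (v * u) ^ 2 + c * (v * u ^ 2) ^ 2 =
        d * v * (v * u) * (v * u ^ 2) := by
  rintro ⟨u, v, hv, heq⟩
  have hv2 : (v ^ 2 : ℤ) ≠ 0 := pow_ne_zero _ hv
  have key : a + b * u ^ 2 + c * u ^ 4 = d * v * u ^ 3 := by
    have h : v ^ 2 * (a + b * u ^ 2 + c * u ^ 4) = v ^ 2 * (d * v * u ^ 3) := by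
      ring_nf
      ring_nf at heq
      linarith
    exact mul_left_cancel₀ hv2 h
  have hu : IsUnit u := by
    apply ha u
    refine ⟨d * v * u - b - c * u ^ 2, ?_⟩
    linear_combination key
  rcases Int.isUnit_iff.mp hu with h1 | h1 <;> subst h1 <;> apply hnd
  · exact ⟨v, by linarith [key]⟩
  · exact ⟨-v, by linear_combination key⟩
end

section
/- The only nontrivial integer geometric-progression solutions (v, vu, vu²), v ≠ 0, of x² + y² + z² = 3xyz are (1, 1, 1) and (−1, 1, −1). -/
theorem stmt_5 (u v : ℤ) (hv : v ≠ 0) :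
    v ^ 2 + (v * u) ^ 2 + (v * u ^ 2) ^ 2 = 3 * v * (v * u) * (v * u ^ 2) ↔
    (v, v * u, v * u ^ 2) = (1, 1, 1) ∨ (v, v * u, v * u ^ 2) = (-1, 1, -1) := by
  constructor
  · intro h
    have hv2 : (v : ℤ) ^ 2 ≠ 0 := pow_ne_zero 2 hv
    have key : 1 + u ^ 2 + u ^ 4 = 3 * v * u ^ 3 :=
      mul_left_cancel₀ hv2 (by linear_combination h)
    have h1 : u ∣ 1 := ⟨3 * v * u ^ 2 - u - u ^ 3, by linear_combination key⟩
    rcases Int.isUnit_iff.mp (isUnit_of_dvd_one h1) with hu | hu <;> subst hu <;>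
      [left; right] <;>
      · have : v = 1 ∨ v = -1 := by omega
        simp only [Prod.mk.injEq]
        omega
  · rintro (h | h) <;>
      · simp only [Prod.mk.injEq] at h
        obtain ⟨h1, h2, h3⟩ := h
        subst h1
        simp only [one_mul, neg_mul, neg_eq_iff_eq_neg, one_pow, neg_neg] at h2 h3
        subst h2
        norm_num
end

section
/- The only nontrivial integer geometric-progression solutions (v, vu, vu²), v ≠ 0, of x² + y² + z² = xyz are (3, 3, 3) and (−3, 3, −3). -/
theorem stmt_6 (u v : ℤ) (hv : v ≠ 0) :
    v ^ 2 + (v * u) ^ 2 + (v * u ^ 2) ^ 2 = v * (v * u) * (v * u ^ 2) ↔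
    (v, v * u, v * u ^ 2) = (3, 3, 3) ∨ (v, v * u, v * u ^ 2) = (-3, 3, -3) := by
  constructor
  · intro h
    have hv2 : (v : ℤ) ^ 2 ≠ 0 := pow_ne_zero _ hv
    have key : 1 + u ^ 2 + u ^ 4 = v * u ^ 3 := by
      have h2 : v ^ 2 * (1 + u ^ 2 + u ^ 4) = v ^ 2 * (v * u ^ 3) := by
        linear_combination h
      exact mul_left_cancel₀ hv2 h2
    have hu : u ∣ 1 := ⟨v * u ^ 2 - u - u ^ 3, by linear_combination key⟩
    rcases Int.isUnit_iff.mp (isUnit_of_dvd_one hu) with rfl | rfl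
    · left
      have : v = 3 := by linarith [key]
      subst this; norm_num
    · right
      have : v = -3 := by
        have : (1 : ℤ) + 1 + 1 = v * (-1) := by linear_combination key
        linarith
      subst this; norm_num
  · rintro (h | h) <;> simp only [Prod.mk.injEq] at h <;>
      obtain ⟨h1, h2, h3⟩ := h <;> subst h1 <;> nlinarith [h2, h3]
end

section
/- There is no nontrivial integer geometric-progression solution (v, vu, vu²) with v ≠ 0 of the equation x² + y² + 5z² = 5xyz. -/
theorem stmt_7 :
    ¬ ∃ u v : ℤ, v ≠ 0 ∧
      v ^ 2 + (v * u) ^ 2 + 5 * (v * u ^ 2) ^ 2 =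
        5 * v * (v * u) * (v * u ^ 2) := by
  rintro ⟨u, v, hv, h⟩
  have hv2 : (v : ℤ)^2 ≠ 0 := pow_ne_zero 2 hv
  have key : 1 + u^2 + 5*u^4 = 5*v*u^3 := by
    refine mul_left_cancel₀ hv2 ?_
    linear_combination h
  have hdvd : u ∣ 1 := ⟨5*v*u^2 - u - 5*u^3, by linear_combination key⟩
  have := Int.isUnit_iff.mp (isUnit_of_dvd_one hdvd)
  rcases this with h1 | h1 <;> subst h1 <;> omega
end

section
/- The complete set of nontrivial integer geometric-progression solutions (v, vu, vu²), v ≠ 0, of 4x² + y² + z² = xyz is {(6, 6, 6), (−6, 6, −6), (3, 6, 12), (−3, 6, −12)}. -/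
theorem stmt_8 (u v : ℤ) (hv : v ≠ 0) :
    4 * v ^ 2 + (v * u) ^ 2 + (v * u ^ 2) ^ 2 = v * (v * u) * (v * u ^ 2) ↔
    (v, v * u, v * u ^ 2) ∈
      ({(6, 6, 6), (-6, 6, -6), (3, 6, 12), (-3, 6, -12)} :
        Set (ℤ × ℤ × ℤ)) := by
  constructor
  · intro h
    have key : v ^ 2 * (4 + u ^ 2 + u ^ 4) = v ^ 2 * (v * u ^ 3) := by
      linear_combination h
    have hv2 : (v : ℤ) ^ 2 ≠ 0 := pow_ne_zero 2 hv
    have heq : 4 + u ^ 2 + u ^ 4 = v * u ^ 3 := mul_left_cancel₀ hv2 key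
    have hdvd : u ^ 3 ∣ u ^ 2 + 4 := ⟨v - u, by linear_combination heq⟩
    have hpos : (0 : ℤ) < u ^ 2 + 4 := by positivity
    have h1 : u ^ 3 ≤ u ^ 2 + 4 := Int.le_of_dvd hpos hdvd
    have h2 : -u ^ 3 ≤ u ^ 2 + 4 := Int.le_of_dvd hpos ((neg_dvd).mpr hdvd)
    have hub : u ≤ 2 := by nlinarith
    have hlb : -2 ≤ u := by nlinarith
    interval_cases u <;>
      simp only [Set.mem_insert_iff, Set.mem_singleton_iff, Prod.mk.injEq] <;>
      push_cast at heq ⊢ <;> omega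
  · intro h
    simp only [Set.mem_insert_iff, Set.mem_singleton_iff, Prod.mk.injEq] at h
    rcases h with ⟨h1, h2, h3⟩ | ⟨h1, h2, h3⟩ | ⟨h1, h2, h3⟩ | ⟨h1, h2, h3⟩ <;>
      subst h1
    · have hu : u = 1 := by omega
      subst hu; norm_num
    · have hu : u = -1 := by omega
      subst hu; norm_num
    · have hu : u = 2 := by omega
      subst hu; norm_num
    · have hu : u = -2 := by omega
      subst hu; norm_num
end

section
/- Let d be a positive integer with d ≠ 1 and d ≠ 3. Then there are no nontrivial integer geometric-progression solutions (v, vu, vu²), v ≠ 0, of x² + y² + z² = d·xyz. -/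
theorem stmt_9 (d : ℤ) (hd : 0 < d) (h1 : d ≠ 1) (h3 : d ≠ 3) :
    ¬ ∃ u v : ℤ, v ≠ 0 ∧
      v ^ 2 + (v * u) ^ 2 + (v * u ^ 2) ^ 2 =
        d * v * (v * u) * (v * u ^ 2) := by
  rintro ⟨u, v, hv, heq⟩
  have hkey : 1 + u ^ 2 + u ^ 4 = d * v * u ^ 3 := by
    have hv2 : (v ^ 2 : ℤ) ≠ 0 := pow_ne_zero 2 hv
    have : v ^ 2 * (1 + u ^ 2 + u ^ 4) = v ^ 2 * (d * v * u ^ 3) := by ring_nf; linarith [heq]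
    exact mul_left_cancel₀ hv2 this
  have hu1 : u ∣ 1 := ⟨d * v * u ^ 2 - u - u ^ 3, by linear_combination hkey⟩
  have hd3 : d ∣ 3 := by
    rcases Int.isUnit_iff.mp (isUnit_of_dvd_one hu1) with h | h <;> subst h
    · exact ⟨v, by linarith [hkey]⟩
    · exact ⟨-v, by linarith [hkey]⟩
  have hle : d ≤ 3 := Int.le_of_dvd (by norm_num) hd3
  interval_cases d
  · exact h1 rfl
  · norm_num at hd3
  · exact h3 rfl
end

section
/- In the ring of Gaussian integers ℤ[i], the only solutions (X, Y) of Y⁴ − XY³ + Y² + 1 = 0 are (3, 1), (−3, −1), (i, i), and (−i, −i). -/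
theorem stmt_12 (X Y : GaussianInt) :
    Y ^ 4 - X * Y ^ 3 + Y ^ 2 + 1 = 0 ↔
    (X, Y) ∈ ({(3, 1), (-3, -1), (⟨0, 1⟩, ⟨0, 1⟩), (⟨0, -1⟩, ⟨0, -1⟩)} :
      Set (GaussianInt × GaussianInt)) := by
  constructor
  · intro h
    have key : Y * (Y ^ 3 - X * Y ^ 2 + Y) = -1 := by ring_nf; linear_combination h
    have hn : Y.norm * (Y ^ 3 - X * Y ^ 2 + Y).norm = 1 := by
      rw [← Zsqrtd.norm_mul, key]; simp [Zsqrtd.norm]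
    have h1 : Y.norm = 1 := by
      have h2 := Zsqrtd.norm_nonneg (by norm_num : (-1:ℤ) ≤ 0) Y
      exact Int.eq_one_of_mul_eq_one_right h2 hn
    have hre : Y.re * Y.re + Y.im * Y.im = 1 := by
      simpa [Zsqrtd.norm] using h1
    have hre2 : Y.re ^ 2 ≤ 1 := by nlinarith
    have him2 : Y.im ^ 2 ≤ 1 := by nlinarith
    have hre3 : Y.re = 0 ∨ Y.re = 1 ∨ Y.re = -1 := by
      have a1 : -1 ≤ Y.re := by nlinarith [sq_nonneg (Y.re + 1)]
      have a2 : Y.re ≤ 1 := by nlinarith [sq_nonneg (Y.re - 1)]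
      omega
    have him3 : Y.im = 0 ∨ Y.im = 1 ∨ Y.im = -1 := by
      have a1 : -1 ≤ Y.im := by nlinarith [sq_nonneg (Y.im + 1)]
      have a2 : Y.im ≤ 1 := by nlinarith [sq_nonneg (Y.im - 1)]
      omega
    have hY : Y = 1 ∨ Y = -1 ∨ Y = ⟨0,1⟩ ∨ Y = ⟨0,-1⟩ := by
      rcases hre3 with h'|h'|h' <;> rcases him3 with h''|h''|h'' <;>
        simp_all [Zsqrtd.ext_iff] <;> omega
    have hXext := Zsqrtd.ext_iff.mp h
    rcases hY with hY|hY|hY|hY <;> subst hY <;>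
      simp_all [Zsqrtd.ext_iff, Zsqrtd.re_mul, Zsqrtd.im_mul, pow_succ] <;> omega
  · intro h
    rcases h with h|h|h|h <;>
      simp_all [Prod.ext_iff] <;>
      obtain ⟨h1, h2⟩ := h <;> subst h1 <;> subst h2 <;>
      ext <;> simp [Zsqrtd.ext_iff, Zsqrtd.re_mul, Zsqrtd.im_mul, pow_succ]
end

section
/- The only nontrivial geometric-progression triples (α, αβ, αβ²) with α, β ∈ ℤ[i], α ≠ 0, satisfying x² + y² + z² = xyz are (3, 3, 3), (−3, 3, −3), (i, −1, −i), and (−i, −1, i). -/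
/-!
Dividing the equation by `α²` gives `1 + β² + β⁴ = αβ³`, so `β ∣ 1` and `β` is one of the four
units `±1, ±i` of `ℤ[i]`. Since `β⁴ = 1`, multiplying by `β` yields `α = β(1 + β² + β⁴)`, and the
four values of `β` give the four triples.
-/

theorem markov_eq_geom_triple_iff {R : Type*} [CommRing R] [IsDomain R] {α β : R}
    (hα : α ≠ 0) :
    α ^ 2 + (α * β) ^ 2 + (α * β ^ 2) ^ 2 = α * (α * β) * (α * β ^ 2) ↔
      1 + β ^ 2 + β ^ 4 = α * β ^ 3 := by
  conv_rhs => rw [← mul_right_inj' (pow_ne_zero 2 hα)]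
  ring_nf

theorem isUnit_of_one_add_sq_add_pow_four_eq {R : Type*} [CommRing R] {α β : R}
    (h : 1 + β ^ 2 + β ^ 4 = α * β ^ 3) : IsUnit β :=
  isUnit_of_dvd_one ⟨α * β ^ 2 - β - β ^ 3, by linear_combination h⟩

theorem eq_of_one_add_sq_add_pow_four_eq {R : Type*} [CommRing R] {α β : R} (hβ : β ^ 4 = 1)
    (h : 1 + β ^ 2 + β ^ 4 = α * β ^ 3) : α = β * (1 + β ^ 2 + β ^ 4) := by
  linear_combination -α * hβ - β * h

namespace GaussianInt

theorem isUnit_iff {z : GaussianInt} :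
    IsUnit z ↔ z = 1 ∨ z = -1 ∨ z = ⟨0, 1⟩ ∨ z = ⟨0, -1⟩ := by
  rw [← Zsqrtd.norm_eq_one_iff' (by norm_num)]
  obtain ⟨a, b⟩ := z
  simp only [Zsqrtd.norm_def, Zsqrtd.ext_iff, Zsqrtd.re_one, Zsqrtd.im_one, Zsqrtd.re_neg,
    Zsqrtd.im_neg]
  constructor
  · intro h
    have ha₁ : -1 ≤ a := by nlinarith [sq_nonneg (a + 1), sq_nonneg b]
    have ha₂ : a ≤ 1 := by nlinarith [sq_nonneg (a - 1), sq_nonneg b]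
    have hb₁ : -1 ≤ b := by nlinarith [sq_nonneg (b + 1), sq_nonneg a]
    have hb₂ : b ≤ 1 := by nlinarith [sq_nonneg (b - 1), sq_nonneg a]
    interval_cases a <;> interval_cases b <;> omega
  · rintro (⟨rfl, rfl⟩ | ⟨rfl, rfl⟩ | ⟨rfl, rfl⟩ | ⟨rfl, rfl⟩) <;> norm_num

theorem pow_four_eq_one_of_isUnit {z : GaussianInt} (hz : IsUnit z) : z ^ 4 = 1 := by
  rcases isUnit_iff.mp hz with rfl | rfl | rfl | rfl <;> decide

end GaussianInt

theorem stmt_13 (α β : GaussianInt) (hα : α ≠ 0) :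
    α ^ 2 + (α * β) ^ 2 + (α * β ^ 2) ^ 2 = α * (α * β) * (α * β ^ 2) ↔
    (α, α * β, α * β ^ 2) ∈
      ({(3, 3, 3), (-3, 3, -3), (⟨0, 1⟩, -1, ⟨0, -1⟩), (⟨0, -1⟩, -1, ⟨0, 1⟩)} :
        Set (GaussianInt × GaussianInt × GaussianInt)) := by
  simp only [Set.mem_insert_iff, Set.mem_singleton_iff, Prod.mk.injEq]
  constructor
  · rw [markov_eq_geom_triple_iff hα]
    intro h
    have hβ := isUnit_of_one_add_sq_add_pow_four_eq h
    obtain rfl := eq_of_one_add_sq_add_pow_four_eq (GaussianInt.pow_four_eq_one_of_isUnit hβ) h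
    rcases GaussianInt.isUnit_iff.mp hβ with rfl | rfl | rfl | rfl <;> decide
  · rintro (⟨hx, hy, hz⟩ | ⟨hx, hy, hz⟩ | ⟨hx, hy, hz⟩ | ⟨hx, hy, hz⟩) <;>
      rw [hy, hz, hx] <;> decide
end

section
/- Let D be a squarefree positive integer with D ≠ 1, and let O be the ring of integers of ℚ(√−D). For d a positive integer with d ∉ {1, 3}, there is no unit η ∈ O with η⁴ + η² + 1 ≡ 0 (mod d·O), and consequently (when D ≠ 3) there are no nontrivial geometric-progression triples (α, αβ, αβ²), α ≠ 0, in O satisfying x² + y² + z² = d·xyz beyond those with rational integer coordinates, i.e., there are none at all. -/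
/-!
Write `K = ℚ(θ)` with `θ² = -D`. An integral element `a + bθ` has integral trace `2a` and norm
`a² + Db²`, and the norm of a unit is `1`. Thus `(2a)² + D(2b)² = 4`, and since `D` is squarefree
with `D ≠ 1, 3` this forces `b = 0`: the only units are `±1`, so `η⁴ + η² + 1 = 3`, which `d` does
not divide. A geometric-progression solution `(α, αβ, αβ²)` makes `β` a unit with
`β⁴ + β² + 1 = dαβ³`, which is excluded by the first part.
-/

open Polynomial NumberField

theorem Squarefree.intCast_dvd_of_mul_sq_eq {D : ℕ} (hD : Squarefree D) {x : ℚ} {k : ℤ}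
    (h : (D : ℚ) * x ^ 2 = k) : (D : ℤ) ∣ k := by
  have key : (D : ℤ) * x.num ^ 2 = k * x.den ^ 2 := by
    have h' : (D : ℚ) * (x.num : ℚ) ^ 2 = k * (x.den : ℚ) ^ 2 := by
      rw [← Rat.mul_den_eq_num, mul_pow, ← mul_assoc, h]
    exact_mod_cast h'
  have hcop : IsCoprime (x.den : ℤ) x.num := by
    rw [Int.isCoprime_iff_gcd_eq_one]
    simpa [Int.gcd, Nat.coprime_comm] using x.reduced
  have hden : x.den * x.den ∣ D := by
    have : (x.den : ℤ) ^ 2 ∣ D := hcop.pow.dvd_of_dvd_mul_right ⟨k, by rw [key, mul_comm]⟩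
    exact_mod_cast sq (x.den : ℤ) ▸ this
  have hden1 : x.den = 1 := Nat.isUnit_iff.mp (hD _ hden)
  rw [hden1] at key
  exact ⟨x.num ^ 2, by simpa using key.symm⟩

theorem eq_zero_of_sq_add_mul_sq_eq_one {D : ℕ} (hD : Squarefree D) (hD1 : D ≠ 1) (hD3 : D ≠ 3)
    {a b : ℚ} {m : ℤ} (hm : (m : ℚ) = 2 * a) (h : a ^ 2 + D * b ^ 2 = 1) : b = 0 := by
  by_contra hb
  have hD0 := hD.ne_zero
  have hDb : 0 < (D : ℚ) * b ^ 2 := by positivity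
  have hm4 : (m : ℚ) ^ 2 + D * (2 * b) ^ 2 = 4 := by rw [hm]; linear_combination 4 * h
  have hm_sq : m ^ 2 < 4 := by exact_mod_cast (by linarith : (m : ℚ) ^ 2 < 4)
  have hD_not_dvd : ¬ (D : ℤ) ∣ 3 := fun h ↦ by
    rcases (Nat.dvd_prime Nat.prime_three).mp (by exact_mod_cast h) with h | h <;> contradiction
  have hm_lo : -2 < m := by nlinarith
  have hm_hi : m < 2 := by nlinarith
  interval_cases m
  · exact hD_not_dvd (hD.intCast_dvd_of_mul_sq_eq (x := 2 * b) (by norm_num at hm4 ⊢; linarith))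
  · exact hD_not_dvd <| (hD.intCast_dvd_of_mul_sq_eq (x := b) (k := 1)
      (by push_cast at hm ⊢; nlinarith)).trans (by norm_num)
  · exact hD_not_dvd (hD.intCast_dvd_of_mul_sq_eq (x := 2 * b) (by norm_num at hm4 ⊢; linarith))

theorem NumberField.RingOfIntegers.natCast_dvd_natCast {K : Type*} [Field K] [NumberField K]
    {m n : ℕ} : (m : 𝓞 K) ∣ n ↔ m ∣ n := by
  refine ⟨fun h ↦ ?_, Nat.cast_dvd_cast⟩
  have h' := map_dvd (Algebra.norm ℤ) h
  rw [Algebra.norm_natCast, Algebra.norm_natCast, Int.pow_dvd_pow_iff Module.finrank_pos.ne'] at h'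
  exact_mod_cast h'

theorem exists_intCast_eq_coeff_of_isIntegral {K : Type*} [Field K] [CharZero K] {x : K}
    (hx : IsIntegral ℤ x) {p : ℚ[X]} (hirr : Irreducible p) (hmon : p.Monic)
    (hroot : aeval x p = 0) (i : ℕ) : ∃ n : ℤ, (n : ℚ) = p.coeff i := by
  rw [minpoly.eq_of_irreducible_of_monic hirr hroot hmon,
    minpoly.isIntegrallyClosed_eq_field_fractions' ℚ hx, coeff_map]
  exact ⟨_, (eq_intCast _ _).symm⟩

theorem isUnit_and_dvd_of_geometric_solution {R : Type*} [CommRing R] [IsDomain R] {c α β : R}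
    (hα : α ≠ 0) (h : α ^ 2 + (α * β) ^ 2 + (α * β ^ 2) ^ 2 = c * α * (α * β) * (α * β ^ 2)) :
    IsUnit β ∧ c ∣ β ^ 4 + β ^ 2 + 1 := by
  have key : β ^ 4 + β ^ 2 + 1 = c * α * β ^ 3 :=
    mul_left_cancel₀ (pow_ne_zero 2 hα) (by linear_combination h)
  exact ⟨IsUnit.of_mul_eq_one (c * α * β ^ 2 - β ^ 3 - β) (by linear_combination -key),
    ⟨α * β ^ 3, by linear_combination key⟩⟩

section SqrtNeg

variable {K : Type*} [Field K] {D : ℕ} {θ : K}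

section CharZero

variable [CharZero K]

theorem ratCast_add_mul_eq_zero (hD : D ≠ 0) (hθ : θ ^ 2 = -(D : K)) {a b : ℚ}
    (h : (a : K) + b * θ = 0) : a = 0 ∧ b = 0 := by
  by_cases hb : b = 0
  · subst hb
    simpa using h
  · have hθq : θ = ((-a / b : ℚ) : K) := by
      push_cast
      field_simp
      linear_combination h
    have hsq : ((-a / b) ^ 2 : ℚ) = -D := by
      rw [hθq] at hθ
      exact_mod_cast hθ
    have : (0 : ℚ) < D := by positivity
    nlinarith [sq_nonneg (-a / b)]

theorem exists_eq_ratCast_add_mul (hD : D ≠ 0) (hθ : θ ^ 2 = -(D : K))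
    (hdeg : Module.finrank ℚ K = 2) (x : K) : ∃ a b : ℚ, x = a + b * θ := by
  have hli : LinearIndependent ℚ ![1, θ] := LinearIndependent.pair_iff.mpr fun s t hst ↦
    ratCast_add_mul_eq_zero hD hθ (by simpa [Rat.smul_def] using hst)
  have : FiniteDimensional ℚ K := Module.finite_of_finrank_pos (by omega)
  have hspan := hli.span_eq_top_of_card_eq_finrank' (by simp [hdeg])
  rw [Matrix.range_cons_cons_empty] at hspan
  obtain ⟨a, b, hab⟩ := Submodule.mem_span_pair.mp (hspan ▸ Submodule.mem_top : x ∈ _)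
  exact ⟨a, b, by simpa [Rat.smul_def] using hab.symm⟩

theorem exists_intCast_of_isIntegral (hD : D ≠ 0) (hθ : θ ^ 2 = -(D : K)) {a b : ℚ}
    (h : IsIntegral ℤ ((a : K) + b * θ)) :
    (∃ m : ℤ, (m : ℚ) = 2 * a) ∧ ∃ n : ℤ, (n : ℚ) = a ^ 2 + D * b ^ 2 := by
  by_cases hb : b = 0
  · subst hb
    have ha : IsIntegral ℤ a := by
      rw [← isIntegral_algebraMap_iff (algebraMap ℚ K).injective]
      simpa using h
    obtain ⟨k, rfl⟩ := IsIntegrallyClosed.isIntegral_iff.mp ha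
    rw [eq_intCast]
    exact ⟨⟨2 * k, by push_cast; ring⟩, ⟨k ^ 2, by push_cast; ring⟩⟩
  set p : ℚ[X] := X ^ 2 - C (2 * a) * X + C (a ^ 2 + D * b ^ 2) with hp
  have hmon : p.Monic := by rw [hp]; monicity!
  have hdeg : p.natDegree = 2 := by rw [hp]; compute_degree!
  have hroot : aeval ((a : K) + b * θ) p = 0 := by
    simp only [hp, map_add, map_sub, map_mul, map_pow, aeval_X, aeval_C, eq_ratCast]
    push_cast
    linear_combination (b : K) ^ 2 * hθ
  -- `p(r) = (r - a)² + Db²` is positive on `ℚ`.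
  have hirr : Irreducible p := by
    refine irreducible_of_degree_le_three_of_not_isRoot (by simp [hdeg]) fun r hr ↦ ?_
    have hr' : (r - a) ^ 2 + D * b ^ 2 = 0 := by
      simp only [hp, IsRoot, eval_add, eval_sub, eval_mul, eval_pow, eval_X, eval_C] at hr
      linear_combination hr
    have : 0 < (D : ℚ) * b ^ 2 := by positivity
    nlinarith [sq_nonneg (r - a)]
  obtain ⟨m, hm⟩ := exists_intCast_eq_coeff_of_isIntegral h hirr hmon hroot 1
  obtain ⟨n, hn⟩ := exists_intCast_eq_coeff_of_isIntegral h hirr hmon hroot 0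
  refine ⟨⟨-m, ?_⟩, ⟨n, ?_⟩⟩
  all_goals
    simp only [Int.cast_neg, hm, hn, hp, coeff_add, coeff_sub, coeff_C_mul_X, coeff_X_pow, coeff_C]
    norm_num

end CharZero

variable [NumberField K]

theorem sq_add_mul_sq_eq_one_of_unit (hD : D ≠ 0) (hθ : θ ^ 2 = -(D : K))
    (hdeg : Module.finrank ℚ K = 2) (η : (𝓞 K)ˣ) {a b : ℚ}
    (hη : ((η : 𝓞 K) : K) = a + b * θ) : a ^ 2 + D * b ^ 2 = 1 := by
  obtain ⟨c, e, hη'⟩ := exists_eq_ratCast_add_mul hD hθ hdeg ((η⁻¹ : (𝓞 K)ˣ) : K)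
  have hprod : ((η : 𝓞 K) : K) * ((η⁻¹ : (𝓞 K)ˣ) : K) = 1 := by
    rw [← algebraMap.coe_mul, Units.mul_inv, algebraMap.coe_one]
  obtain ⟨h1, h2⟩ := ratCast_add_mul_eq_zero (a := a * c - D * b * e - 1) (b := a * e + b * c)
    hD hθ (by rw [hη, hη'] at hprod; push_cast; linear_combination hprod - b * e * hθ)
  obtain ⟨-, n, hn⟩ := exists_intCast_of_isIntegral hD hθ
    (by rw [← hη]; exact RingOfIntegers.isIntegral_coe _)
  obtain ⟨-, n', hn'⟩ := exists_intCast_of_isIntegral hD hθ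
    (by rw [← hη']; exact RingOfIntegers.isIntegral_coe _)
  -- Brahmagupta's identity: the norm form is multiplicative.
  have hnn' : n * n' = 1 := by
    have : (n : ℚ) * n' = 1 := by
      rw [hn, hn']
      linear_combination (a * c - D * b * e + 1) * h1 + D * (a * e + b * c) * h2
    exact_mod_cast this
  have hn0 : 0 ≤ n := by
    have : (0 : ℚ) ≤ n := by rw [hn]; positivity
    exact_mod_cast this
  rw [← hn, Int.eq_one_of_mul_eq_one_right hn0 hnn', Int.cast_one]

theorem coe_sq_eq_one_of_unit (hD : Squarefree D) (hD1 : D ≠ 1) (hD3 : D ≠ 3)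
    (hθ : θ ^ 2 = -(D : K)) (hdeg : Module.finrank ℚ K = 2) (η : (𝓞 K)ˣ) :
    (η : 𝓞 K) ^ 2 = 1 := by
  obtain ⟨a, b, hη⟩ := exists_eq_ratCast_add_mul hD.ne_zero hθ hdeg ((η : 𝓞 K) : K)
  obtain ⟨⟨m, hm⟩, -⟩ := exists_intCast_of_isIntegral hD.ne_zero hθ
    (by rw [← hη]; exact RingOfIntegers.isIntegral_coe _)
  have hnorm := sq_add_mul_sq_eq_one_of_unit hD.ne_zero hθ hdeg η hη
  obtain rfl := eq_zero_of_sq_add_mul_sq_eq_one hD hD1 hD3 hm hnorm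
  apply RingOfIntegers.ext
  push_cast [hη, Rat.cast_zero, zero_mul, add_zero]
  exact_mod_cast (by simpa using hnorm : a ^ 2 = 1)

end SqrtNeg

theorem stmt_14_general (D : ℕ) (hD : Squarefree D) (hD1 : D ≠ 1) (hD3 : D ≠ 3)
    (K : Type*) [Field K] [NumberField K]
    (θ : K) (hθ : θ ^ 2 = -(D : K)) (hdeg : Module.finrank ℚ K = 2)
    (d : ℕ) (hd1 : d ≠ 1) (hd3 : d ≠ 3) :
    (∀ η : (NumberField.RingOfIntegers K)ˣ,
      ¬ ((d : NumberField.RingOfIntegers K) ∣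
          ((η : NumberField.RingOfIntegers K) ^ 4 +
            (η : NumberField.RingOfIntegers K) ^ 2 + 1))) ∧
    ¬ ∃ α β : NumberField.RingOfIntegers K, α ≠ 0 ∧
        α ^ 2 + (α * β) ^ 2 + (α * β ^ 2) ^ 2 =
          (d : NumberField.RingOfIntegers K) * α * (α * β) * (α * β ^ 2) := by
  have hunits : ∀ η : (𝓞 K)ˣ, ¬ (d : 𝓞 K) ∣ (η : 𝓞 K) ^ 4 + (η : 𝓞 K) ^ 2 + 1 := by
    intro η hdvd
    have h3 : (η : 𝓞 K) ^ 4 + (η : 𝓞 K) ^ 2 + 1 = (3 : ℕ) := by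
      rw [show (η : 𝓞 K) ^ 4 = ((η : 𝓞 K) ^ 2) ^ 2 by ring,
        coe_sq_eq_one_of_unit hD hD1 hD3 hθ hdeg]
      norm_num
    rw [h3, RingOfIntegers.natCast_dvd_natCast, Nat.dvd_prime Nat.prime_three] at hdvd
    tauto
  refine ⟨hunits, fun ⟨α, β, hα, h⟩ ↦ ?_⟩
  obtain ⟨hβ, hdvd⟩ := isUnit_and_dvd_of_geometric_solution hα h
  exact hunits hβ.unit hdvd

theorem stmt_14 (D : ℕ) (hD : Squarefree D) (hD0 : 0 < D) (hD1 : D ≠ 1) (hD3 : D ≠ 3)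
    (K : Type*) [Field K] [NumberField K]
    (θ : K) (hθ : θ ^ 2 = -(D : K)) (hdeg : Module.finrank ℚ K = 2)
    (d : ℕ) (hd0 : 0 < d) (hd1 : d ≠ 1) (hd3 : d ≠ 3) :
    (∀ η : (NumberField.RingOfIntegers K)ˣ,
      ¬ ((d : NumberField.RingOfIntegers K) ∣
          ((η : NumberField.RingOfIntegers K) ^ 4 +
            (η : NumberField.RingOfIntegers K) ^ 2 + 1))) ∧
    ¬ ∃ α β : NumberField.RingOfIntegers K, α ≠ 0 ∧
        α ^ 2 + (α * β) ^ 2 + (α * β ^ 2) ^ 2 =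
          (d : NumberField.RingOfIntegers K) * α * (α * β) * (α * β ^ 2) :=
  stmt_14_general D hD hD1 hD3 K θ hθ hdeg d hd1 hd3
end

section
/- There are no α, β ∈ ℤ[√3] with α ≠ 0 such that the triple (α, αβ, αβ²) satisfies x² + y² + 5z² = 5xyz. -/
private lemma three_nonsquare : ∀ n : ℤ, (3:ℤ) ≠ n * n := by
  intro n hn
  have h := congrArg (Int.cast : ℤ → ZMod 4) hn
  push_cast at h
  revert h
  generalize ((n : ZMod 4)) = x
  revert x
  decide

private lemma zsqrtd3_nzd : ∀ a b : ℤ√3, a * b = 0 → a = 0 ∨ b = 0 := by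
  intro a b h
  have h2 := congrArg Zsqrtd.norm h
  rw [Zsqrtd.norm_mul, Zsqrtd.norm_zero] at h2
  rcases mul_eq_zero.mp h2 with h' | h'
  · exact Or.inl ((Zsqrtd.norm_eq_zero three_nonsquare a).mp h')
  · exact Or.inr ((Zsqrtd.norm_eq_zero three_nonsquare b).mp h')

theorem stmt_17 :
    ¬ ∃ α β : ℤ√3, α ≠ 0 ∧
      α ^ 2 + (α * β) ^ 2 + 5 * (α * β ^ 2) ^ 2 =
        5 * α * (α * β) * (α * β ^ 2) := by
  haveI : NoZeroDivisors (ℤ√3) := ⟨fun {a b} h => zsqrtd3_nzd a b h⟩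
  rintro ⟨α, β, hα, heq⟩
  have hα2 : (α ^ 2 : ℤ√3) ≠ 0 := pow_ne_zero 2 hα
  -- cancel α²
  have h2 : α ^ 2 * (1 + β ^ 2 + 5 * β ^ 4) = α ^ 2 * (5 * α * β ^ 3) := by
    linear_combination heq
  have h1 : (1 : ℤ√3) + β ^ 2 + 5 * β ^ 4 = 5 * α * β ^ 3 :=
    mul_left_cancel₀ hα2 h2
  -- β is a unit
  have hβ1 : β ∣ 1 := ⟨5 * α * β ^ 2 - β - 5 * β ^ 3, by linear_combination h1⟩
  have hu : IsUnit β := isUnit_of_dvd_one hβ1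
  have hnorm : β.norm.natAbs = 1 := Zsqrtd.norm_eq_one_iff.mpr hu
  have hnd : β.norm = β.re * β.re - 3 * β.im * β.im := Zsqrtd.norm_def β
  -- 5 ∣ 1 + β²
  have hdvd5 : ((5 : ℤ) : ℤ√3) ∣ 1 + β ^ 2 := by
    refine ⟨α * β ^ 3 - β ^ 4, ?_⟩
    push_cast
    linear_combination h1
  have hre : (5 : ℤ) ∣ (1 + β ^ 2).re := ((Zsqrtd.intCast_dvd 5 _).mp hdvd5).1
  have hrecalc : (1 + β ^ 2).re = 1 + (β.re * β.re + 3 * β.im * β.im) := by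
    simp [pow_two, Zsqrtd.re_add, Zsqrtd.re_mul]
  rw [hrecalc] at hre
  set a := β.re
  set b := β.im
  rcases Int.natAbs_eq_iff.mp hnorm with h | h <;> rw [hnd] at h
  · -- norm β = 1 : contradiction mod 5
    have c1 := congrArg (Int.cast : ℤ → ZMod 5) h
    have c2 : ((1 + (a * a + 3 * b * b) : ℤ) : ZMod 5) = 0 :=
      (ZMod.intCast_zmod_eq_zero_iff_dvd _ 5).mpr hre
    push_cast at c1 c2
    revert c1 c2
    generalize ((a : ZMod 5)) = x
    generalize ((b : ZMod 5)) = y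
    revert x y
    decide
  · -- norm β = -1 : contradiction mod 3
    have c1 := congrArg (Int.cast : ℤ → ZMod 3) h
    push_cast at c1
    revert c1
    generalize ((a : ZMod 3)) = x
    generalize ((b : ZMod 3)) = y
    revert x y
    decide
end

section
/- Let O = ℤ[(1+√5)/2] be the ring of integers of ℚ(√5), ε = (1+√5)/2. For every integer z, set γ = ε^(4z) and β = (γ + γ^(−1) + γ^(−3))/3. Then β ∈ O and the triple (β, βγ, βγ²) satisfies x² + y² + z² = 3xyz. -/
/-!
Write `γ = u ^ (4 z)` with `u` the unit `ε` of `𝓞 K`. Since `ε⁸ = 1 + 3 (7 ε + 4)`, every power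
`γ² = (ε⁸) ^ z` and its inverse are `≡ 1 (mod 3)`, so `γ² + 1 + γ⁻² = 3 y` with `y ∈ 𝓞 K`, and
`β = γ⁻¹ (γ² + 1 + γ⁻²) / 3 = γ⁻¹ y` is an algebraic integer. The Markov equation for
`(β, β γ, β γ²)` reduces, after dividing by `β²`, to `3 β γ³ = γ⁴ + γ² + 1`.
-/

open NumberField Polynomial

theorem dvd_zpow_sub_one_of_dvd_sub_one {R : Type*} [CommRing R] {a : R} {v : Rˣ}
    (h : a ∣ (v : R) - 1) (n : ℤ) : a ∣ ((v ^ n : Rˣ) : R) - 1 := by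
  have hnat (k : ℕ) : a ∣ ((v ^ k : Rˣ) : R) - 1 := by
    simpa using h.trans (sub_dvd_pow_sub_pow (v : R) 1 k)
  obtain ⟨k, rfl | rfl⟩ := n.eq_nat_or_neg
  · exact_mod_cast hnat k
  · have hinv : ((v ^ k)⁻¹ : Rˣ) - (1 : R) = -↑(v ^ k)⁻¹ * (↑(v ^ k) - 1) := by
      linear_combination Units.inv_mul (v ^ k)
    rw [zpow_neg, zpow_natCast, hinv]
    exact dvd_mul_of_dvd_right (hnat k) _

theorem markov_of_eq_div_three {K : Type*} [Field K] {γ β : K}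
    (hβ : β = (γ + γ⁻¹ + γ ^ (-3 : ℤ)) / 3) :
    β ^ 2 + (β * γ) ^ 2 + (β * γ ^ 2) ^ 2 = 3 * β * (β * γ) * (β * γ ^ 2) := by
  obtain rfl | hγ := eq_or_ne γ 0
  · simp [hβ]
  by_cases h3 : (3 : K) = 0
  · simp [hβ, h3]
  have key : 3 * β * γ ^ 3 = γ ^ 4 + γ ^ 2 + 1 := by
    rw [hβ, zpow_neg, zpow_ofNat]
    field_simp
  linear_combination (-β ^ 2) * key

section GoldenUnit

variable {K : Type*} [Field K]

theorem isIntegral_of_sq_eq_add_one {ε : K} (hε : ε ^ 2 = ε + 1) : IsIntegral ℤ ε :=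
  ⟨X ^ 2 - X - 1, by monicity!, by simp [hε]⟩

theorem exists_unit_coe_eq_of_sq_eq_add_one {ε : K} (hε : ε ^ 2 = ε + 1) :
    ∃ u : (𝓞 K)ˣ, (u : K) = ε := by
  let e : 𝓞 K := ⟨ε, isIntegral_of_sq_eq_add_one hε⟩
  have he : e * (e - 1) = 1 := RingOfIntegers.coe_injective <| by
    change ε * (ε - 1) = 1
    linear_combination hε
  exact ⟨Units.mkOfMulEqOne e (e - 1) he, rfl⟩

theorem three_dvd_pow_eight_sub_one {u : (𝓞 K)ˣ} (hu : (u : K) ^ 2 = u + 1) :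
    (3 : 𝓞 K) ∣ ((u ^ 8 : (𝓞 K)ˣ) : 𝓞 K) - 1 := by
  have hu' : (u : 𝓞 K) ^ 2 = u + 1 := RingOfIntegers.coe_injective <| by
    simpa using hu
  exact ⟨7 * u + 4, by push_cast; linear_combination (u ^ 6 + u ^ 5 + 2 * u ^ 4 + 3 * u ^ 3 +
    5 * u ^ 2 + 8 * u + 13 : 𝓞 K) * hu'⟩

theorem isIntegral_of_eq_div_three {ε γ β : K} {z : ℤ} (hε : ε ^ 2 = ε + 1)
    (hγ : γ = ε ^ (4 * z)) (hβ : β = (γ + γ⁻¹ + γ ^ (-3 : ℤ)) / 3) : IsIntegral ℤ β := by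
  by_cases h3 : (3 : K) = 0
  · simpa [hβ, h3] using isIntegral_zero
  obtain ⟨u, rfl⟩ := exists_unit_coe_eq_of_sq_eq_add_one hε
  rw [hβ, hγ, ← Units.coe_zpow]
  set w := u ^ (4 * z)
  have hw (n : ℤ) : (3 : 𝓞 K) ∣ ((w ^ (2 * n) : (𝓞 K)ˣ) : 𝓞 K) - 1 := by
    have hpow : w ^ (2 * n) = (u ^ 8) ^ (z * n) := by
      rw [← zpow_mul, ← zpow_natCast, ← zpow_mul]; ring_nf
    rw [hpow]
    exact dvd_zpow_sub_one_of_dvd_sub_one (three_dvd_pow_eight_sub_one hε) _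
  obtain ⟨y, hy⟩ : (3 : 𝓞 K) ∣
      ((w ^ (2 : ℤ) : (𝓞 K)ˣ) : 𝓞 K) + 1 + ((w ^ (-2 : ℤ) : (𝓞 K)ˣ) : 𝓞 K) := by
    convert ((hw 1).add (hw (-1))).add (dvd_refl 3) using 1
    norm_num
    ring
  have hyK : (w : K) ^ 2 + 1 + ((w : K) ^ 2)⁻¹ = 3 * y := by
    simpa [Units.coe_zpow, map_ofNat] using congrArg (algebraMap (𝓞 K) K) hy
  convert RingOfIntegers.isIntegral_coe (((w⁻¹ : (𝓞 K)ˣ) : 𝓞 K) * y) using 1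
  have hw0 := Units.coe_ne_zero w
  rw [map_mul, map_units_inv]
  field_simp at hyK ⊢
  linear_combination hyK

end GoldenUnit

theorem stmt_18_general (K : Type*) [Field K] [NumberField K]
    (θ : K) (hθ : θ ^ 2 = 5)
    (ε : K) (hε : ε = (1 + θ) / 2) (z : ℤ)
    (γ β : K) (hγ : γ = ε ^ (4 * z)) (hβ : β = (γ + γ⁻¹ + γ ^ (-3 : ℤ)) / 3) :
    IsIntegral ℤ β ∧
      β ^ 2 + (β * γ) ^ 2 + (β * γ ^ 2) ^ 2 = 3 * β * (β * γ) * (β * γ ^ 2) := by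
  have hε2 : ε ^ 2 = ε + 1 := by
    rw [hε]
    field_simp
    linear_combination hθ
  exact ⟨isIntegral_of_eq_div_three hε2 hγ hβ, markov_of_eq_div_three hβ⟩

theorem stmt_18 (K : Type*) [Field K] [NumberField K]
    (θ : K) (hθ : θ ^ 2 = 5) (hdeg : Module.finrank ℚ K = 2)
    (ε : K) (hε : ε = (1 + θ) / 2) (z : ℤ)
    (γ β : K) (hγ : γ = ε ^ (4 * z)) (hβ : β = (γ + γ⁻¹ + γ ^ (-3 : ℤ)) / 3) :
    IsIntegral ℤ β ∧
      β ^ 2 + (β * γ) ^ 2 + (β * γ ^ 2) ^ 2 = 3 * β * (β * γ) * (β * γ ^ 2) :=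
  stmt_18_general K θ hθ ε hε z γ β hγ hβ
end

section
/- Let K be a number field with ring of integers O_K, and let a, b, c, d ∈ O_K with a and d units of O_K. For every unit u ∈ O_K, setting γ_u = d⁻¹(cu + bu⁻¹ + au⁻³), the triple (γ_u, uγ_u, u²γ_u) ∈ K³ satisfies aX² + bY² + cZ² = dXYZ; moreover γ_u ∈ O_K, so this gives an O_K-point in geometric progression. -/
theorem stmt_19 (K : Type*) [Field K] [NumberField K]
    (a b c d u : NumberField.RingOfIntegers K)
    (ha : IsUnit a) (hd : IsUnit d) (hu : IsUnit u) :
    ∃ γ : NumberField.RingOfIntegers K,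
      d * u ^ 3 * γ = c * u ^ 4 + b * u ^ 2 + a ∧
      a * γ ^ 2 + b * (u * γ) ^ 2 + c * (u ^ 2 * γ) ^ 2 =
        d * γ * (u * γ) * (u ^ 2 * γ) := by
  obtain ⟨e, he⟩ := (hd.mul (hu.pow 3)).exists_left_inv
  refine ⟨e * (c * u ^ 4 + b * u ^ 2 + a), ?_, ?_⟩
  · have h1 : d * u ^ 3 * (e * (c * u ^ 4 + b * u ^ 2 + a)) =
        (e * (d * u ^ 3)) * (c * u ^ 4 + b * u ^ 2 + a) := by ring
    rw [h1, he, one_mul]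
  · have h1 : d * u ^ 3 * (e * (c * u ^ 4 + b * u ^ 2 + a)) =
        (e * (d * u ^ 3)) * (c * u ^ 4 + b * u ^ 2 + a) := by ring
    rw [he, one_mul] at h1
    linear_combination (e * (c * u ^ 4 + b * u ^ 2 + a))^2 * h1.symm
end
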